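/- Let S' be a retract of a shelf (S, ◁) with retraction t ∈ T_S. Then the map sending each orbit of S to the orbit of S' containing its image under t is a well-defined bijection between the orbit set of S and the orbit set of S'; moreover the preimage under t of any orbit of S' is contained in a single orbit of S. -/

import Mathlib

/-- The translation semigroup `T_S` of a shelf `(S, op)`:
the subsemigroup of `Function.End S` generated by the left translations `τ_a : b ↦ a ◁ b`. -/
def transSemigroup {S : Type} (op : S → S → S) : Subsemigroup (Function.End S) :=
  Subsemigroup.closure (Set.range (fun a => (fun b => op a b : Function.End S)))

/-- The orbit relation of a shelf: the equivalence relation generated by `a ∼ b ◁ a`.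
Its classes are the orbits. -/
def orbRel {S : Type} (op : S → S → S) : S → S → Prop :=
  Relation.EqvGen (fun x y => ∃ b, y = op b x)

/-!
Every element of the translation semigroup is a shelf endomorphism (by self-distributivity) and
moves each element inside its own orbit. Hence `t` maps orbits of `S` into orbits of `S'`, and,
since orbits of the subshelf `S'` lie inside orbits of `S`, `t x ∼ t y` in `S'` forces
`x ∼ t x ∼ t y ∼ y` in `S`. Surjectivity comes from `t` fixing `S'` pointwise.
-/

theorem map_op_of_mem_transSemigroup {S : Type} {op : S → S → S}
    (sd : ∀ a b c : S, op a (op b c) = op (op a b) (op a c))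
    {t : Function.End S} (ht : t ∈ transSemigroup op) (b x : S) :
    t (op b x) = op (t b) (t x) := by
  induction ht using Subsemigroup.closure_induction generalizing b x with
  | mem f hf =>
    obtain ⟨a, rfl⟩ := hf
    exact sd a b x
  | mul f g _ _ hf hg =>
    change f (g (op b x)) = op (f (g b)) (f (g x))
    rw [hg, hf]

theorem orbRel_apply_of_mem_transSemigroup {S : Type} {op : S → S → S}
    {t : Function.End S} (ht : t ∈ transSemigroup op) (z : S) :
    orbRel op z (t z) := by
  induction ht using Subsemigroup.closure_induction generalizing z with
  | mem f hf =>
    obtain ⟨a, rfl⟩ := hf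
    exact .rel _ _ ⟨a, rfl⟩
  | mul f g _ _ hf hg => exact (hg z).trans _ _ _ (hf (g z))

theorem orbRel_map {S T : Type} {op : S → S → S} {op' : T → T → T} {f : S → T}
    (hf : ∀ b x, f (op b x) = op' (f b) (f x)) {x y : S} (h : orbRel op x y) :
    orbRel op' (f x) (f y) := by
  induction h with
  | rel a b hab =>
    obtain ⟨c, rfl⟩ := hab
    exact .rel _ _ ⟨f c, hf c a⟩
  | refl a => exact .refl _
  | symm a b _ ih => exact ih.symm
  | trans a b c _ _ ih₁ ih₂ => exact ih₁.trans _ _ _ ih₂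

theorem quot_mk_orbRel_eq_iff {S : Type} {op : S → S → S} {x y : S} :
    Quot.mk (orbRel op) x = Quot.mk (orbRel op) y ↔ orbRel op x y :=
  ⟨fun h => (Relation.EqvGen.is_equivalence _).eqvGen_iff.mp (Quot.eqvGen_exact h), Quot.sound⟩

theorem retract_orbit_bijection_general {S : Type} (op : S → S → S)
    (sd : ∀ a b c : S, op a (op b c) = op (op a b) (op a c))
    (S' : Set S) (hS' : ∀ x ∈ S', ∀ y ∈ S', op x y ∈ S')
    (t : Function.End S) (ht : t ∈ transSemigroup op)
    (hmem : ∀ x, t x ∈ S') (hfix : ∀ b ∈ S', t b = b) :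
    (∃ F : Quot (orbRel op) →
        Quot (orbRel (fun x y : S' => (⟨op x.1 y.1, hS' x.1 x.2 y.1 y.2⟩ : S'))),
      (∀ x : S, F (Quot.mk _ x) = Quot.mk _ (⟨t x, hmem x⟩ : S'))
        ∧ Function.Bijective F)
      ∧ ∀ x y : S,
          orbRel (fun x y : S' => (⟨op x.1 y.1, hS' x.1 x.2 y.1 y.2⟩ : S'))
            ⟨t x, hmem x⟩ ⟨t y, hmem y⟩ → orbRel op x y := by
  set op' := fun x y : S' => (⟨op x.1 y.1, hS' x.1 x.2 y.1 y.2⟩ : S')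
  have preserve (x y : S) (h : orbRel op x y) : orbRel op' ⟨t x, hmem x⟩ ⟨t y, hmem y⟩ :=
    orbRel_map (f := fun z => (⟨t z, hmem z⟩ : S'))
      (fun b z => Subtype.ext (map_op_of_mem_transSemigroup sd ht b z)) h
  have reflect (x y : S) (h : orbRel op' ⟨t x, hmem x⟩ ⟨t y, hmem y⟩) : orbRel op x y :=
    (orbRel_apply_of_mem_transSemigroup ht x).trans _ _ _
      ((orbRel_map (f := Subtype.val) (fun _ _ => rfl) h).trans _ _ _
        (orbRel_apply_of_mem_transSemigroup ht y).symm)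
  refine ⟨⟨Quot.lift (fun x => Quot.mk (orbRel op') ⟨t x, hmem x⟩)
    (fun x y h => Quot.sound (preserve x y h)), fun _ => rfl, ?_, ?_⟩, reflect⟩
  · rintro ⟨x⟩ ⟨y⟩ h
    exact Quot.sound (reflect x y (quot_mk_orbRel_eq_iff.mp h))
  · rintro ⟨s⟩
    exact ⟨Quot.mk _ s.1, congrArg (Quot.mk _) (Subtype.ext (hfix s.1 s.2))⟩

/-- Let `S'` be a retract of a shelf `(S, ◁)` with retraction `t`.  Then the map sending
each orbit of `S` to the orbit of `S'` containing its image under `t` is a well-defined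
bijection between the orbit sets, and the preimage under `t` of any orbit of `S'` is
contained in a single orbit of `S`. -/
theorem retract_orbit_bijection {S : Type} (op : S → S → S)
    (sd : ∀ a b c : S, op a (op b c) = op (op a b) (op a c))
    (S' : Set S) (hS' : ∀ x ∈ S', ∀ y ∈ S', op x y ∈ S')
    (t : Function.End S) (ht : t ∈ transSemigroup op)
    (hmem : ∀ x, t x ∈ S') (hrange : Set.range t = S') (hfix : ∀ b ∈ S', t b = b) :
    (∃ F : Quot (orbRel op) →
        Quot (orbRel (fun x y : S' => (⟨op x.1 y.1, hS' x.1 x.2 y.1 y.2⟩ : S'))),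
      (∀ x : S, F (Quot.mk _ x) = Quot.mk _ (⟨t x, hmem x⟩ : S'))
        ∧ Function.Bijective F)
      ∧ ∀ x y : S,
          orbRel (fun x y : S' => (⟨op x.1 y.1, hS' x.1 x.2 y.1 y.2⟩ : S'))
            ⟨t x, hmem x⟩ ⟨t y, hmem y⟩ → orbRel op x y :=
  retract_orbit_bijection_general op sd S' hS' t ht hmem hfix
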